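/- Let Ω ∈ ℝ^{n×d} and Ω̃ ∈ ℝ^{ñ×d} be matrices such that the stacked matrix Ω_F = [Ω; Ω̃] ∈ ℝ^{(n+ñ)×d} is a frame with lower frame bound A > 0. Let B ∈ ℝ^{m₂×d} satisfy ‖B Ω̃† v‖₂ ≥ C₁₁‖v‖₂ for all v ∈ ℝ^{ñ} and ‖B(I − Ω̃†Ω̃)z‖₂ ≤ C₁₂‖z‖₂ for all z ∈ ℝ^d, where C₁₁ > 0, C₁₂ ≥ 0 and C₁₂/(C₁₁·A) < 1. Let A_mat ∈ ℝ^{m₁×n}, k ≥ 1, and suppose 𝒜 : ℝ^{m₁} → ℝ^n satisfies, for every α ∈ ℝ^n and every e₁ ∈ ℝ^{m₁}, ‖α − 𝒜(A_mat α + e₁)‖₂ ≤ C₁₃‖e₁‖₂ + (C₁₄/√k)‖α − [α]_k‖₁, for fixed constants C₁₃, C₁₄ ≥ 0. Let x ∈ ℝ^d, e₁ ∈ ℝ^{m₁}, e₂ ∈ ℝ^{m₂}, y₁ = A_mat Ω x + e₁, y₂ = Bx + e₂, ŵ = 𝒜(y₁), and let x̂ be a minimizer of ‖Ω x̃ − ŵ‖₂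 over all x̃ satisfying ‖B x̃ − y₂‖₂ ≤ ‖e₂‖₂. Then, with c = 1 − C₁₂/(A·C₁₁), β = 1/(A·c), and γ = 1/(A·C₁₁·c), one has ‖x̂ − x‖₂ ≤ 2β(C₁₃‖e₁‖₂ + (C₁₄/√k)‖Ωx − [Ωx]_k‖₁) + 2γ‖e₂‖₂. -/

import Mathlib

open Matrix

/-- The Euclidean (ℓ₂) norm of a finitely-indexed real vector. -/
noncomputable def l2norm {ι : Type*} [Fintype ι] (v : ι → ℝ) : ℝ :=
  Real.sqrt (∑ i, v i ^ 2)

/-- The ℓ₁ norm of a finitely-indexed real vector. -/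
def l1norm {ι : Type*} [Fintype ι] (v : ι → ℝ) : ℝ :=
  ∑ i, |v i|

/-- `αk` is a best `k`-term approximation of `α`: it keeps the `k`
largest-magnitude entries of `α` and sets the others to zero. -/
def IsBestKTermApprox {ι : Type*} [Fintype ι] [DecidableEq ι] (k : ℕ)
    (α αk : ι → ℝ) : Prop :=
  ∃ S : Finset ι, S.card = min k (Fintype.card ι) ∧
    (∀ i, αk i = if i ∈ S then α i else 0) ∧
    ∀ i ∈ S, ∀ j ∉ S, |α j| ≤ |α i|

/-- `P` is the Moore–Penrose pseudo-inverse of `Ω` (the four Penrose conditions). -/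
def IsMoorePenroseInv {ι κ : Type*} [Fintype ι] [Fintype κ]
    (Ω : Matrix ι κ ℝ) (P : Matrix κ ι ℝ) : Prop :=
  Ω * P * Ω = Ω ∧ P * Ω * P = P ∧ (Ω * P)ᵀ = Ω * P ∧ (P * Ω)ᵀ = P * Ω

/-!
Write `h = x̂ - x`. Both `x` and `x̂` satisfy the constraint, so `‖B h‖ ≤ 2‖e₂‖`, and by
minimality of `x̂` also `‖Ω h‖ ≤ 2‖Ω x - ŵ‖`, which the recovery guarantee of `𝒜` bounds.
The frame bound gives `A‖h‖ ≤ ‖Ω h‖ + ‖Ω̃ h‖`, and `Ω̃ h` is seen by `B` through `Ω̃†`: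
`C₁₁‖Ω̃ h‖ ≤ ‖B Ω̃† Ω̃ h‖ ≤ ‖B h‖ + C₁₂‖h‖`. Since `C₁₂ < A C₁₁`, the `‖h‖` on the right is
absorbed, leaving `(A C₁₁ - C₁₂)‖h‖ ≤ C₁₁‖Ω h‖ + ‖B h‖`.
-/

theorem Real.sqrt_add_le_add_sqrt {a b : ℝ} (ha : 0 ≤ a) (hb : 0 ≤ b) : √(a + b) ≤ √a + √b :=
  Real.sqrt_le_iff.mpr ⟨by positivity, by
    nlinarith [Real.sq_sqrt ha, Real.sq_sqrt hb, Real.sqrt_nonneg a, Real.sqrt_nonneg b]⟩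

section L2Norm

variable {ι κ : Type*} [Fintype ι] [Fintype κ]

theorem l2norm_eq_norm_toLp (v : ι → ℝ) : l2norm v = ‖WithLp.toLp 2 v‖ := by
  simp [l2norm, EuclideanSpace.norm_eq]

theorem l2norm_neg (v : ι → ℝ) : l2norm (-v) = l2norm v := by
  simp [l2norm]

theorem l2norm_sub_le (u v : ι → ℝ) : l2norm (u - v) ≤ l2norm u + l2norm v := by
  simpa only [l2norm_eq_norm_toLp, WithLp.toLp_sub] using norm_sub_le _ _

theorem l2norm_sub_le_sub_add_sub (u v w : ι → ℝ) :
    l2norm (u - v) ≤ l2norm (u - w) + l2norm (v - w) := by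
  simpa only [l2norm_eq_norm_toLp, WithLp.toLp_sub, ← dist_eq_norm]
    using dist_triangle_right _ _ _

theorem l2norm_sum_elim_le (u : ι → ℝ) (v : κ → ℝ) :
    l2norm (Sum.elim u v) ≤ l2norm u + l2norm v := by
  simp only [l2norm, Fintype.sum_sum_type, Sum.elim_inl, Sum.elim_inr]
  exact Real.sqrt_add_le_add_sqrt (by positivity) (by positivity)

end L2Norm

section PartialFrame

variable {ι ι' κ μ : Type*} [Fintype ι] [Fintype ι'] [Fintype κ] [Fintype μ]
  {Ω : Matrix ι κ ℝ} {Ωtil : Matrix ι' κ ℝ} {P : Matrix κ ι' ℝ} {B : Matrix μ κ ℝ}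
  {A C₁₁ C₁₂ : ℝ}

theorem mul_l2norm_mulVec_le_of_sampling
    (hBP : ∀ v, C₁₁ * l2norm v ≤ l2norm (B *ᵥ (P *ᵥ v)))
    (hBI : ∀ z, l2norm (B *ᵥ (z - P *ᵥ (Ωtil *ᵥ z))) ≤ C₁₂ * l2norm z) (h : κ → ℝ) :
    C₁₁ * l2norm (Ωtil *ᵥ h) ≤ l2norm (B *ᵥ h) + C₁₂ * l2norm h :=
  calc C₁₁ * l2norm (Ωtil *ᵥ h)
      ≤ l2norm (B *ᵥ h - B *ᵥ (h - P *ᵥ (Ωtil *ᵥ h))) := by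
        simpa only [mulVec_sub, sub_sub_cancel] using hBP (Ωtil *ᵥ h)
    _ ≤ l2norm (B *ᵥ h) + C₁₂ * l2norm h := (l2norm_sub_le _ _).trans (by gcongr; exact hBI h)

theorem sub_mul_l2norm_le_of_frame (hC₁₁ : 0 ≤ C₁₁)
    (hframe : ∀ z, A * l2norm z ≤ l2norm (Sum.elim (Ω *ᵥ z) (Ωtil *ᵥ z)))
    (hBP : ∀ v, C₁₁ * l2norm v ≤ l2norm (B *ᵥ (P *ᵥ v)))
    (hBI : ∀ z, l2norm (B *ᵥ (z - P *ᵥ (Ωtil *ᵥ z))) ≤ C₁₂ * l2norm z) (h : κ → ℝ) :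
    (C₁₁ * A - C₁₂) * l2norm h ≤ C₁₁ * l2norm (Ω *ᵥ h) + l2norm (B *ᵥ h) := by
  have hA : A * l2norm h ≤ l2norm (Ω *ᵥ h) + l2norm (Ωtil *ᵥ h) :=
    (hframe h).trans (l2norm_sum_elim_le _ _)
  linarith [mul_le_mul_of_nonneg_left hA hC₁₁, mul_l2norm_mulVec_le_of_sampling hBP hBI h]

end PartialFrame

theorem stmt_5_general {n nt d m₁ m₂ : ℕ} (k : ℕ)
    (Ω : Matrix (Fin n) (Fin d) ℝ) (Ωtil : Matrix (Fin nt) (Fin d) ℝ)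
    (A : ℝ) (hA : 0 < A)
    -- The stacked matrix Ω_F = [Ω; Ω̃] is a frame with lower frame bound A:
    (hframe : ∀ z : Fin d → ℝ,
      A * l2norm z ≤ l2norm (Sum.elim (Ω.mulVec z) (Ωtil.mulVec z)))
    (P : Matrix (Fin d) (Fin nt) ℝ)
    (B : Matrix (Fin m₂) (Fin d) ℝ)
    (C₁₁ C₁₂ : ℝ) (hC₁₁ : 0 < C₁₁)
    (hratio : C₁₂ / (C₁₁ * A) < 1)
    -- σ_min(B Ω̃†) ≥ C₁₁:
    (hBP : ∀ v : Fin nt → ℝ, C₁₁ * l2norm v ≤ l2norm (B.mulVec (P.mulVec v)))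
    -- ‖B (I − Ω̃† Ω̃)‖ ≤ C₁₂:
    (hBI : ∀ z : Fin d → ℝ,
      l2norm (B.mulVec (z - P.mulVec (Ωtil.mulVec z))) ≤ C₁₂ * l2norm z)
    (Amat : Matrix (Fin m₁) (Fin n) ℝ)
    (C₁₃ C₁₄ : ℝ)
    (Arec : (Fin m₁ → ℝ) → (Fin n → ℝ))
    (hArec : ∀ (α : Fin n → ℝ) (e₁ : Fin m₁ → ℝ) (αk : Fin n → ℝ),
      IsBestKTermApprox k α αk →
      l2norm (α - Arec (Amat.mulVec α + e₁)) ≤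
        C₁₃ * l2norm e₁ + (C₁₄ / Real.sqrt k) * l1norm (α - αk))
    (x : Fin d → ℝ) (e₁ : Fin m₁ → ℝ) (e₂ : Fin m₂ → ℝ)
    (y₁ : Fin m₁ → ℝ) (hy₁ : y₁ = Amat.mulVec (Ω.mulVec x) + e₁)
    (y₂ : Fin m₂ → ℝ) (hy₂ : y₂ = B.mulVec x + e₂)
    (wHat : Fin n → ℝ) (hwHat : wHat = Arec y₁)
    (xHat : Fin d → ℝ)
    (hfeas : l2norm (B.mulVec xHat - y₂) ≤ l2norm e₂)
    (hmin : ∀ xTil : Fin d → ℝ, l2norm (B.mulVec xTil - y₂) ≤ l2norm e₂ →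
      l2norm (Ω.mulVec xHat - wHat) ≤ l2norm (Ω.mulVec xTil - wHat))
    (wk : Fin n → ℝ) (hwk : IsBestKTermApprox k (Ω.mulVec x) wk)
    (c β γ : ℝ) (hc : c = 1 - C₁₂ / (A * C₁₁))
    (hβ : β = 1 / (A * c)) (hγ : γ = 1 / (A * C₁₁ * c)) :
    l2norm (xHat - x) ≤
      2 * β * (C₁₃ * l2norm e₁ + (C₁₄ / Real.sqrt k) * l1norm (Ω.mulVec x - wk)) +
        2 * γ * l2norm e₂ := by
  set E := C₁₃ * l2norm e₁ + (C₁₄ / Real.sqrt k) * l1norm (Ω *ᵥ x - wk)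
  have hrec : l2norm (Ω *ᵥ x - wHat) ≤ E := hwHat ▸ hy₁ ▸ hArec _ _ _ hwk
  have hx_feas : l2norm (B *ᵥ x - y₂) ≤ l2norm e₂ := by
    rw [hy₂, sub_add_cancel_left, l2norm_neg]
  have hΩ : l2norm (Ω *ᵥ (xHat - x)) ≤ 2 * E := by
    rw [mulVec_sub]
    linarith [l2norm_sub_le_sub_add_sub (Ω *ᵥ xHat) (Ω *ᵥ x) wHat, hmin x hx_feas]
  have hB : l2norm (B *ᵥ (xHat - x)) ≤ 2 * l2norm e₂ := by
    rw [mulVec_sub]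
    linarith [l2norm_sub_le_sub_add_sub (B *ᵥ xHat) (B *ᵥ x) y₂]
  have hgap : 0 < C₁₁ * A - C₁₂ := by
    linarith [(div_lt_one (mul_pos hC₁₁ hA)).mp hratio]
  have hbound : 2 * β * E + 2 * γ * l2norm e₂ =
      (C₁₁ * (2 * E) + 2 * l2norm e₂) / (C₁₁ * A - C₁₂) := by
    have hAc : A * c = (C₁₁ * A - C₁₂) / C₁₁ := by rw [hc]; field_simp
    rw [hβ, hγ, mul_right_comm A, hAc]
    field_simp
  rw [hbound, le_div_iff₀ hgap]
  linarith [sub_mul_l2norm_le_of_frame hC₁₁.le hframe hBP hBI (xHat - x),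
    mul_le_mul_of_nonneg_left hΩ hC₁₁.le]

/-- stable signal recovery from samples of a partial frame. -/
theorem stmt_5 {n nt d m₁ m₂ : ℕ} (k : ℕ) (hk : 1 ≤ k)
    (Ω : Matrix (Fin n) (Fin d) ℝ) (Ωtil : Matrix (Fin nt) (Fin d) ℝ)
    (A : ℝ) (hA : 0 < A)
    -- The stacked matrix Ω_F = [Ω; Ω̃] is a frame with lower frame bound A:
    (hframe : ∀ z : Fin d → ℝ,
      A * l2norm z ≤ l2norm (Sum.elim (Ω.mulVec z) (Ωtil.mulVec z)))
    (P : Matrix (Fin d) (Fin nt) ℝ) (hP : IsMoorePenroseInv Ωtil P)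
    (B : Matrix (Fin m₂) (Fin d) ℝ)
    (C₁₁ C₁₂ : ℝ) (hC₁₁ : 0 < C₁₁) (hC₁₂ : 0 ≤ C₁₂)
    (hratio : C₁₂ / (C₁₁ * A) < 1)
    -- σ_min(B Ω̃†) ≥ C₁₁:
    (hBP : ∀ v : Fin nt → ℝ, C₁₁ * l2norm v ≤ l2norm (B.mulVec (P.mulVec v)))
    -- ‖B (I − Ω̃† Ω̃)‖ ≤ C₁₂:
    (hBI : ∀ z : Fin d → ℝ,
      l2norm (B.mulVec (z - P.mulVec (Ωtil.mulVec z))) ≤ C₁₂ * l2norm z)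
    (Amat : Matrix (Fin m₁) (Fin n) ℝ)
    (C₁₃ C₁₄ : ℝ) (hC₁₃ : 0 ≤ C₁₃) (hC₁₄ : 0 ≤ C₁₄)
    (Arec : (Fin m₁ → ℝ) → (Fin n → ℝ))
    (hArec : ∀ (α : Fin n → ℝ) (e₁ : Fin m₁ → ℝ) (αk : Fin n → ℝ),
      IsBestKTermApprox k α αk →
      l2norm (α - Arec (Amat.mulVec α + e₁)) ≤
        C₁₃ * l2norm e₁ + (C₁₄ / Real.sqrt k) * l1norm (α - αk))
    (x : Fin d → ℝ) (e₁ : Fin m₁ → ℝ) (e₂ : Fin m₂ → ℝ)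
    (y₁ : Fin m₁ → ℝ) (hy₁ : y₁ = Amat.mulVec (Ω.mulVec x) + e₁)
    (y₂ : Fin m₂ → ℝ) (hy₂ : y₂ = B.mulVec x + e₂)
    (wHat : Fin n → ℝ) (hwHat : wHat = Arec y₁)
    (xHat : Fin d → ℝ)
    (hfeas : l2norm (B.mulVec xHat - y₂) ≤ l2norm e₂)
    (hmin : ∀ xTil : Fin d → ℝ, l2norm (B.mulVec xTil - y₂) ≤ l2norm e₂ →
      l2norm (Ω.mulVec xHat - wHat) ≤ l2norm (Ω.mulVec xTil - wHat))
    (wk : Fin n → ℝ) (hwk : IsBestKTermApprox k (Ω.mulVec x) wk)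
    (c β γ : ℝ) (hc : c = 1 - C₁₂ / (A * C₁₁))
    (hβ : β = 1 / (A * c)) (hγ : γ = 1 / (A * C₁₁ * c)) :
    l2norm (xHat - x) ≤
      2 * β * (C₁₃ * l2norm e₁ + (C₁₄ / Real.sqrt k) * l1norm (Ω.mulVec x - wk)) +
        2 * γ * l2norm e₂ :=
  stmt_5_general k Ω Ωtil A hA hframe P B C₁₁ C₁₂ hC₁₁ hratio hBP hBI Amat C₁₃ C₁₄ Arec hArec x e₁
    e₂ y₁ hy₁ y₂ hy₂ wHat hwHat xHat hfeas hmin wk hwk c β γ hc hβ hγ
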